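/- Let k ≥ 2, N ≥ 1, and a, b, c ≥ 1. In the l-layer Mycielskian graph M_k^{(l)}(a,b,c) with l = N, every subgraph with chromatic number k+1 contains at least N + 2 vertices. Consequently, M_k^{(N)}(a,b,c) contains no copy of any graph H with χ(H) = k+1 on at most N vertices. -/

import Mathlib

open SimpleGraph

/-- `H` has a copy in `G` (an injective graph homomorphism). -/
def Contains {α β : Type*} (H : SimpleGraph α) (G : SimpleGraph β) : Prop :=
  ∃ f : H →g G, Function.Injective f

/-- The `l`-layer Mycielskian graph `M_k^{(l)}(a,b,c)`: parts `V_1,…,V_k` of size `a`,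
parts `W_i^m` (`i ∈ [k]`, `m ∈ [l]`, here `m : Fin l`) of size `b`, and `U` of size `c`;
edges are `K[V_i,V_j]` (`i ≠ j`), `K[V_j,W_i^1]` (`i ≠ j`),
`K[W_i^m, W_j^{m+1}]` (`i ≠ j`), and `K[W_i^l, U]`. -/
def MycL (k l a b c : ℕ) :
    SimpleGraph ((Fin k × Fin a) ⊕ (Fin k × Fin l × Fin b) ⊕ Fin c) :=
  SimpleGraph.fromRel (fun x y =>
    match x, y with
    | Sum.inl v, Sum.inl w => v.1 ≠ w.1
    | Sum.inl v, Sum.inr (Sum.inl w) => v.1 ≠ w.1 ∧ (w.2.1 : ℕ) = 0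
    | Sum.inr (Sum.inl v), Sum.inr (Sum.inl w) => v.1 ≠ w.1 ∧ (w.2.1 : ℕ) = v.2.1 + 1
    | Sum.inr (Sum.inl v), Sum.inr (Sum.inr _) => (v.2.1 : ℕ) = l - 1
    | _, _ => False)

/-!
Put `V` on level `0`, `W^m` on level `m + 1` and `U` on level `l + 1`; every edge joins
consecutive levels or lies inside level `0`. If a subgraph misses some level `t`, colour its
vertices below `t` by the index of their part (no edge below level `l + 1` stays inside one index)
and those above `t` by the parity of their level (there all edges join consecutive levels). No
edge crosses the missing level, so this is a proper `k`-colouring. Hence a subgraph of chromatic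
number `k + 1` meets all `l + 2` levels.
-/

namespace SimpleGraph

theorem colorable_of_forall_level_ne {V : Type*} {G : SimpleGraph V} {k t : ℕ} (hk : 2 ≤ k)
    (level : V → ℕ) (col : V → Fin k)
    (hstep : ∀ ⦃x y⦄, G.Adj x y →
      level y = level x + 1 ∨ level x = level y + 1 ∨ (level x = 0 ∧ level y = 0))
    (hcol : ∀ ⦃x y⦄, G.Adj x y → level x < t → level y < t → col x ≠ col y)
    (hgap : ∀ x, level x ≠ t) : G.Colorable k := by
  refine ⟨Coloring.mk
    (fun v => if level v < t then col v else ⟨level v % 2, by omega⟩) fun {x y} hxy => ?_⟩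
  have hx := hgap x
  have hy := hgap y
  have hxy' := hstep hxy
  by_cases hxt : level x < t <;> by_cases hyt : level y < t <;>
    simp only [hxt, hyt, if_true, if_false, ne_eq, Fin.ext_iff]
  · exact fun h => hcol hxy hxt hyt (Fin.ext h)
  all_goals omega

end SimpleGraph

theorem Contains.isContained {α β : Type*} {H : SimpleGraph α} {G : SimpleGraph β}
    (h : Contains H G) : H ⊑ G :=
  let ⟨f, hf⟩ := h
  ⟨f.toCopy hf⟩

namespace MycL

variable {k l a b c : ℕ}

def level : (Fin k × Fin a) ⊕ (Fin k × Fin l × Fin b) ⊕ Fin c → ℕ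
  | Sum.inl _ => 0
  | Sum.inr (Sum.inl w) => w.2.1 + 1
  | Sum.inr (Sum.inr _) => l + 1

-- `U` gets the junk part `0`; parts are only compared below level `l + 1`.
def part [NeZero k] : (Fin k × Fin a) ⊕ (Fin k × Fin l × Fin b) ⊕ Fin c → Fin k
  | Sum.inl v => v.1
  | Sum.inr (Sum.inl w) => w.1
  | Sum.inr (Sum.inr _) => 0

theorem level_of_adj {x y} (h : (MycL k l a b c).Adj x y) :
    level y = level x + 1 ∨ level x = level y + 1 ∨ (level x = 0 ∧ level y = 0) := by
  rw [MycL, fromRel_adj] at h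
  rcases x with v | w | u <;> rcases y with v' | w' | u' <;> grind [level]

theorem part_ne_of_adj [NeZero k] {x y} (h : (MycL k l a b c).Adj x y)
    (hx : level x ≤ l) (hy : level y ≤ l) : part x ≠ part y := by
  rw [MycL, fromRel_adj] at h
  rcases x with v | w | u <;> rcases y with v' | w' | u' <;> grind [level, part]

theorem exists_mem_verts_level_eq (hk : 2 ≤ k) {G' : (MycL k l a b c).Subgraph}
    (hG' : ¬ G'.coe.Colorable k) {t : ℕ} (ht : t ≤ l + 1) : ∃ x ∈ G'.verts, level x = t := by
  have : NeZero k := ⟨by omega⟩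
  by_contra! hgap
  exact hG' <| colorable_of_forall_level_ne hk (fun x => level x.1) (fun x => part x.1)
    (fun _ _ hxy => level_of_adj (G'.adj_sub hxy))
    (fun _ _ hxy hx hy => part_ne_of_adj (G'.adj_sub hxy) (by omega) (by omega))
    fun x => hgap x x.2

theorem add_two_le_ncard_verts (hk : 2 ≤ k) {G' : (MycL k l a b c).Subgraph}
    (hG' : ¬ G'.coe.Colorable k) : l + 2 ≤ G'.verts.ncard :=
  calc l + 2 = (Set.Iio (l + 2)).ncard := (Set.ncard_Iio_nat _).symm
    _ ≤ (level '' G'.verts).ncard :=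
      Set.ncard_le_ncard fun _ ht => exists_mem_verts_level_eq hk hG' (Nat.lt_succ_iff.mp ht)
    _ ≤ G'.verts.ncard := Set.ncard_image_le (Set.toFinite _)

end MycL

theorem stmt9_general (k N a b c : ℕ) (hk : 2 ≤ k) :
    (∀ G' : (MycL k N a b c).Subgraph,
      G'.coe.chromaticNumber = (k + 1 : ℕ) → N + 2 ≤ G'.verts.ncard) ∧
    (∀ (m : ℕ) (H : SimpleGraph (Fin m)), m ≤ N →
      H.chromaticNumber = (k + 1 : ℕ) → ¬ Contains H (MycL k N a b c)) := by
  have not_colorable : ∀ G' : (MycL k N a b c).Subgraph,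
      G'.coe.chromaticNumber = (k + 1 : ℕ) → ¬ G'.coe.Colorable k := fun G' h => by
    rw [Nat.cast_add_one, chromaticNumber_eq_iff_colorable_not_colorable] at h
    exact h.2
  refine ⟨fun G' hG' => MycL.add_two_le_ncard_verts hk (not_colorable G' hG'), ?_⟩
  intro m H hm hH hcopy
  obtain ⟨G', ⟨e⟩⟩ := isContained_iff_exists_iso_subgraph.mp hcopy.isContained
  have hcard : G'.verts.ncard = m := by
    rw [← Nat.card_coe_set_eq, ← Nat.card_congr e.toEquiv, Nat.card_fin]
  have hbig := MycL.add_two_le_ncard_verts hk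
    (not_colorable G' ((chromaticNumber_congr e).symm.trans hH))
  omega

theorem stmt9 (k N a b c : ℕ) (hk : 2 ≤ k) (hN : 1 ≤ N)
    (ha : 1 ≤ a) (hb : 1 ≤ b) (hc : 1 ≤ c) :
    (∀ G' : (MycL k N a b c).Subgraph,
      G'.coe.chromaticNumber = (k + 1 : ℕ) → N + 2 ≤ G'.verts.ncard) ∧
    (∀ (m : ℕ) (H : SimpleGraph (Fin m)), m ≤ N →
      H.chromaticNumber = (k + 1 : ℕ) → ¬ Contains H (MycL k N a b c)) :=
  stmt9_general k N a b c hk
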